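/- Let N ≥ 2 be an integer, let β ∈ ℝ satisfy −1/(4(N−1)) ≤ β ≤ 0, let c₂ > 0, c₄ > 0, and let R > 0. Then there exists a continuous function h : ℝ → ℝ such that h(r) ≥ c₄ + c₂·r² for every r ∈ [0, R], and h(r) = c₄ + c₂·r² + ∫_0^r G(τ, r)·h(τ)^(−1/3) dτ for every r ∈ [0, R], where G is defined as in the context (extended by G(0,r) = 0). -/

import Mathlib

open intervalIntegral

/-- `G₁(τ,s) = ∫_τ^s τ^{N−1}/u^{N−1} du`. -/
noncomputable def G₁ (N : ℕ) (τ s : ℝ) : ℝ :=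
  ∫ u in τ..s, (τ : ℝ) ^ (N - 1) / u ^ (N - 1)

/-- `H₁(τ,s) = τ (s^N − τ^N)/N`. -/
noncomputable def H₁ (N : ℕ) (τ s : ℝ) : ℝ := τ * (s ^ N - τ ^ N) / N

/-- `G₂(τ,s) = ∫_τ^s u^{N−1} G₁(τ,u) du`. -/
noncomputable def G₂ (N : ℕ) (τ s : ℝ) : ℝ :=
  ∫ u in τ..s, u ^ (N - 1) * G₁ N τ u

/-- `G(τ,r) = −β ∫_τ^r H₁(τ,s) s^{1−N} ds
      + ((4(N−1)β+1)/4) ∫_τ^r G₂(τ,s) s^{1−N} ds`. -/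
noncomputable def G (N : ℕ) (β τ r : ℝ) : ℝ :=
  -β * (∫ s in τ..r, H₁ N τ s * s ^ ((1 : ℤ) - N))
    + ((4 * ((N : ℝ) - 1) * β + 1) / 4)
      * ∫ s in τ..r, G₂ N τ s * s ^ ((1 : ℤ) - N)

/-- The kernel `G` extended by `G(0,r) = 0`. -/
noncomputable def Gext (N : ℕ) (β τ r : ℝ) : ℝ :=
  if τ = 0 then 0 else G N β τ r

/-! For `0 < τ` the `r`-derivative of `G(τ, r)` is
`−β H₁(τ,r) r^{1−N} + ((4(N−1)β+1)/4) G₂(τ,r) r^{1−N}`: both coefficients are nonnegative exactly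
when `−1/(4(N−1)) ≤ β ≤ 0`, and both functions take values in `[0, r²]`. As `G(τ, τ) = 0`, the
kernel is nonnegative and uniformly Lipschitz in `r` on `0 ≤ τ ≤ r ≤ R`.

With `h^{−1/3}` truncated to the Lipschitz function `(max h c₄)^{−1/3}`, the `n`-th iterate of the
Volterra–Hammerstein operator on `C([0,R])` is Lipschitz with constant `(AR)ⁿ/n!`, hence a
contraction for large `n`. Since the kernel is nonnegative, its fixed point is at least
`c₄ + c₂ r² ≥ c₄`, so the truncation is inactive. -/

open Set MeasureTheory Function
open scoped NNReal

theorem measurable_parametric_intervalIntegral {α : Type*} [MeasurableSpace α] {μ : Measure ℝ}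
    [SFinite μ] {f : α → ℝ → ℝ} (hf : Measurable (uncurry f)) {a b : α → ℝ}
    (ha : Measurable a) (hb : Measurable b) :
    Measurable fun x => ∫ u in a x..b x, f x u ∂μ := by
  have hIoc : ∀ l r : α → ℝ, Measurable l → Measurable r →
      Measurable fun x => ∫ u in Ioc (l x) (r x), f x u ∂μ := by
    intro l r hl hr
    have hs : MeasurableSet {p : α × ℝ | l p.1 < p.2 ∧ p.2 ≤ r p.1} :=
      (measurableSet_lt (hl.comp measurable_fst) measurable_snd).inter
        (measurableSet_le measurable_snd (hr.comp measurable_fst))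
    convert ((hf.indicator hs).stronglyMeasurable.integral_prod_right' (ν := μ)).measurable
      using 2 with x
    rw [← MeasureTheory.integral_indicator measurableSet_Ioc]
    rfl
  exact (hIoc a b ha hb).sub (hIoc b a hb ha)

theorem intervalIntegrable_of_abs_le {f : ℝ → ℝ} {a b M : ℝ} (hab : a ≤ b) (hf : Measurable f)
    (hM : ∀ x ∈ Icc a b, |f x| ≤ M) : IntervalIntegrable f volume a b :=
  (intervalIntegrable_const (c := M)).mono_fun hf.aestronglyMeasurable <| by
    rw [uIoc_of_le hab]
    filter_upwards [ae_restrict_mem measurableSet_Ioc] with x hx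
    exact (hM x (Ioc_subset_Icc_self hx)).trans (le_abs_self M)

theorem integral_mem_Icc_of_mem_Icc {f : ℝ → ℝ} {a b M : ℝ} (hab : a ≤ b) (hf : Measurable f)
    (hM : ∀ x ∈ Icc a b, f x ∈ Icc 0 M) : ∫ x in a..b, f x ∈ Icc 0 (M * (b - a)) := by
  refine ⟨intervalIntegral.integral_nonneg hab fun x hx => (hM x hx).1, ?_⟩
  have hint := intervalIntegrable_of_abs_le hab hf fun x hx =>
    abs_le.2 ⟨by linarith [(hM x hx).1, (hM x hx).2], (hM x hx).2⟩
  simpa [mul_comm] using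
    intervalIntegral.integral_mono_on hab hint intervalIntegrable_const fun x hx => (hM x hx).2

structure IsVolterraKernel (K : ℝ → ℝ → ℝ) (R : ℝ) (C : ℝ≥0) : Prop where
  measurable : ∀ r, Measurable fun τ => K τ r
  apply_self : ∀ τ, K τ τ = 0
  sub_mem_Icc : ∀ ⦃τ r₁ r₂⦄, 0 ≤ τ → τ ≤ r₁ → r₁ ≤ r₂ → r₂ ≤ R →
    K τ r₂ - K τ r₁ ∈ Icc 0 (C * (r₂ - r₁))

noncomputable def volterra (K : ℝ → ℝ → ℝ) (w : ℝ → ℝ) (x : ℝ) : ℝ := ∫ τ in 0..x, K τ x * w τ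

namespace IsVolterraKernel

variable {K : ℝ → ℝ → ℝ} {R : ℝ} {C : ℝ≥0} (hK : IsVolterraKernel K R C)
  {w w₁ w₂ g : ℝ → ℝ} {τ r x y : ℝ}
include hK

theorem mem_Icc (hτ : 0 ≤ τ) (hr : τ ≤ r) (hR : r ≤ R) : K τ r ∈ Icc 0 (C * (r - τ)) := by
  simpa [hK.apply_self] using hK.sub_mem_Icc hτ le_rfl hr hR

theorem abs_le (hτ : 0 ≤ τ) (hr : τ ≤ r) (hR : r ≤ R) : |K τ r| ≤ C * R := by
  obtain ⟨h₀, h₁⟩ := hK.mem_Icc hτ hr hR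
  rw [abs_of_nonneg h₀]
  exact h₁.trans (mul_le_mul_of_nonneg_left (by linarith) C.2)

theorem volterra_nonneg (hw : ∀ t, 0 ≤ w t) (hx : 0 ≤ x) (hxR : x ≤ R) : 0 ≤ volterra K w x :=
  intervalIntegral.integral_nonneg hx fun τ hτ =>
    mul_nonneg (hK.mem_Icc hτ.1 hτ.2 hxR).1 (hw τ)

theorem intervalIntegrable_mul (hw : Continuous w) {a b : ℝ} (ha : 0 ≤ a) (hab : a ≤ b)
    (hbx : b ≤ x) (hxR : x ≤ R) : IntervalIntegrable (fun τ => K τ x * w τ) volume a b := by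
  obtain ⟨B, hB⟩ := isCompact_Icc.exists_bound_of_continuousOn (s := Icc a b) hw.continuousOn
  refine intervalIntegrable_of_abs_le (M := C * R * B) hab ((hK.measurable x).mul hw.measurable)
    fun τ hτ => ?_
  rw [abs_mul]
  exact mul_le_mul (hK.abs_le (ha.trans hτ.1) (hτ.2.trans hbx) hxR) (hB τ hτ) (abs_nonneg _)
    (mul_nonneg C.2 (ha.trans (hab.trans (hbx.trans hxR))))

theorem abs_volterra_sub_le {B : ℝ} (hw : Continuous w) (hB : ∀ t ∈ Icc 0 R, |w t| ≤ B)
    (hx : 0 ≤ x) (hxy : x ≤ y) (hyR : y ≤ R) :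
    |volterra K w y - volterra K w x| ≤ 2 * C * R * B * (y - x) := by
  have hB₀ : 0 ≤ B := (abs_nonneg _).trans (hB 0 ⟨le_rfl, hx.trans (hxy.trans hyR)⟩)
  have hI₀x := hK.intervalIntegrable_mul hw le_rfl hx hxy hyR
  have hIxy := hK.intervalIntegrable_mul hw hx hxy le_rfl hyR
  have hsplit : volterra K w y - volterra K w x
      = (∫ τ in 0..x, (K τ y - K τ x) * w τ) + ∫ τ in x..y, K τ y * w τ := by
    have hdiff : ∫ τ in 0..x, (K τ y - K τ x) * w τ
        = (∫ τ in 0..x, K τ y * w τ) - volterra K w x := by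
      simp only [sub_mul]
      exact intervalIntegral.integral_sub hI₀x
        (hK.intervalIntegrable_mul hw le_rfl hx le_rfl (hxy.trans hyR))
    rw [hdiff, volterra, ← intervalIntegral.integral_add_adjacent_intervals hI₀x hIxy]
    ring
  have hnear : |∫ τ in 0..x, (K τ y - K τ x) * w τ| ≤ C * (y - x) * B * x := by
    have h := intervalIntegral.norm_integral_le_of_norm_le_const
      (C := C * (y - x) * B) (f := fun τ => (K τ y - K τ x) * w τ) fun τ hτ => by
        rw [uIoc_of_le hx] at hτ
        obtain ⟨h₀, h₁⟩ := hK.sub_mem_Icc hτ.1.le hτ.2 hxy hyR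
        rw [Real.norm_eq_abs, abs_mul, abs_of_nonneg h₀]
        exact mul_le_mul h₁ (hB τ ⟨hτ.1.le, hτ.2.trans (hxy.trans hyR)⟩) (abs_nonneg _)
          (mul_nonneg C.2 (by linarith))
    rwa [Real.norm_eq_abs, sub_zero, abs_of_nonneg hx] at h
  have hfar : |∫ τ in x..y, K τ y * w τ| ≤ C * R * B * (y - x) := by
    have h := intervalIntegral.norm_integral_le_of_norm_le_const
      (C := C * R * B) (f := fun τ => K τ y * w τ) fun τ hτ => by
        rw [uIoc_of_le hxy] at hτ
        rw [Real.norm_eq_abs, abs_mul]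
        exact mul_le_mul (hK.abs_le (hx.trans hτ.1.le) hτ.2 hyR)
          (hB τ ⟨hx.trans hτ.1.le, hτ.2.trans hyR⟩) (abs_nonneg _)
          (mul_nonneg C.2 (by linarith))
    rwa [Real.norm_eq_abs, abs_of_nonneg (sub_nonneg.2 hxy)] at h
  have hCB : 0 ≤ C * (y - x) * B * (R - x) :=
    mul_nonneg (mul_nonneg (mul_nonneg C.2 (sub_nonneg.2 hxy)) hB₀) (by linarith)
  rw [hsplit]
  calc _ ≤ |∫ τ in 0..x, (K τ y - K τ x) * w τ| + |∫ τ in x..y, K τ y * w τ| := abs_add_le _ _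
    _ ≤ C * (y - x) * B * x + C * R * B * (y - x) := add_le_add hnear hfar
    _ ≤ 2 * C * R * B * (y - x) := by linarith

theorem continuousOn_volterra (hw : Continuous w) : ContinuousOn (volterra K w) (Icc 0 R) := by
  obtain ⟨B, hB⟩ := isCompact_Icc.exists_bound_of_continuousOn (s := Icc 0 R) hw.continuousOn
  refine (LipschitzOnWith.of_dist_le_mul (K := Real.toNNReal (2 * C * R * B))
    fun x hx y hy => ?_).continuousOn
  wlog hxy : y ≤ x generalizing x y
  · rw [dist_comm, dist_comm x]
    exact this y hy x hx (le_of_not_ge hxy)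
  rw [Real.dist_eq, Real.dist_eq, abs_of_nonneg (sub_nonneg.2 hxy)]
  exact (hK.abs_volterra_sub_le hw hB hy.1 hxy hx.2).trans
    (mul_le_mul_of_nonneg_right (Real.le_coe_toNNReal _) (sub_nonneg.2 hxy))

theorem abs_volterra_sub_volterra_le (hw₁ : Continuous w₁) (hw₂ : Continuous w₂)
    (hg : Continuous g) (hx : 0 ≤ x) (hxR : x ≤ R) (hw : ∀ t ∈ Icc 0 x, |w₁ t - w₂ t| ≤ g t) :
    |volterra K w₁ x - volterra K w₂ x| ≤ C * R * ∫ t in 0..x, g t := by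
  rw [volterra, volterra, ← intervalIntegral.integral_sub
    (hK.intervalIntegrable_mul hw₁ le_rfl hx le_rfl hxR)
    (hK.intervalIntegrable_mul hw₂ le_rfl hx le_rfl hxR),
    ← intervalIntegral.integral_const_mul (C * R : ℝ) g,
    ← Real.norm_eq_abs]
  refine intervalIntegral.norm_integral_le_of_norm_le hx (ae_of_all _ fun t ht => ?_)
    ((hg.intervalIntegrable (μ := volume) 0 x).const_mul _)
  rw [Real.norm_eq_abs, ← mul_sub, abs_mul]
  exact mul_le_mul (hK.abs_le ht.1.le ht.2 hxR) (hw t ⟨ht.1.le, ht.2⟩) (abs_nonneg _)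
    (mul_nonneg C.2 (ht.1.le.trans (ht.2.trans hxR)))

end IsVolterraKernel

section VolterraFixedPoint

variable {R A : ℝ} {T : C(Icc 0 R, ℝ) → C(Icc 0 R, ℝ)}

theorem abs_iterate_sub_iterate_le
    (hT : ∀ φ₁ φ₂ (g : ℝ → ℝ), Continuous g → (∀ x : Icc 0 R, |φ₁ x - φ₂ x| ≤ g x) →
      ∀ x : Icc 0 R, |T φ₁ x - T φ₂ x| ≤ A * ∫ t in 0..(x : ℝ), g t)
    (n : ℕ) (φ₁ φ₂ : C(Icc 0 R, ℝ)) (x : Icc 0 R) :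
    |T^[n] φ₁ x - T^[n] φ₂ x| ≤ dist φ₁ φ₂ * (A * x) ^ n / n.factorial := by
  induction n generalizing x with
  | zero => simpa [← Real.dist_eq] using ContinuousMap.dist_apply_le_dist x
  | succ n ih =>
    rw [iterate_succ_apply', iterate_succ_apply']
    refine (hT _ _ (fun t => dist φ₁ φ₂ * (A * t) ^ n / n.factorial) (by fun_prop) ih x).trans_eq ?_
    have hint : ∫ t in (0 : ℝ)..x, dist φ₁ φ₂ * (A * t) ^ n / n.factorial
        = dist φ₁ φ₂ * A ^ n / n.factorial * (x ^ (n + 1) / (n + 1)) := by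
      have hfun : (fun t : ℝ => dist φ₁ φ₂ * (A * t) ^ n / n.factorial)
          = fun t => dist φ₁ φ₂ * A ^ n / n.factorial * t ^ n := by
        funext t
        ring
      rw [hfun, intervalIntegral.integral_const_mul, integral_pow]
      ring
    rw [hint, Nat.factorial_succ]
    push_cast
    field_simp
    ring

theorem exists_fixedPoint_of_abs_sub_le_integral (hA : 0 ≤ A)
    (hT : ∀ φ₁ φ₂ (g : ℝ → ℝ), Continuous g → (∀ x : Icc 0 R, |φ₁ x - φ₂ x| ≤ g x) →
      ∀ x : Icc 0 R, |T φ₁ x - T φ₂ x| ≤ A * ∫ t in 0..(x : ℝ), g t) :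
    ∃ φ, T φ = φ := by
  obtain ⟨n, hn⟩ : ∃ n : ℕ, (A * R) ^ n / n.factorial < 1 :=
    ((FloorSemiring.tendsto_pow_div_factorial_atTop (A * R)).eventually
      (gt_mem_nhds one_pos)).exists
  have hcontr : ContractingWith ((A * R) ^ n / n.factorial).toNNReal T^[n] := by
    refine ⟨Real.toNNReal_lt_one.2 hn, LipschitzWith.of_dist_le_mul fun φ₁ φ₂ => ?_⟩
    refine (ContinuousMap.dist_le (by positivity)).2 fun x => ?_
    rw [Real.dist_eq]
    refine (abs_iterate_sub_iterate_le hT n φ₁ φ₂ x).trans ?_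
    calc dist φ₁ φ₂ * (A * x) ^ n / n.factorial ≤ dist φ₁ φ₂ * ((A * R) ^ n / n.factorial) := by
          rw [mul_div_assoc]
          gcongr
          · exact mul_nonneg hA x.2.1
          · exact x.2.2
      _ ≤ _ := by rw [mul_comm]; gcongr; exact Real.le_coe_toNNReal _
  exact ⟨_, hcontr.isFixedPt_fixedPoint_iterate⟩

end VolterraFixedPoint

namespace IsVolterraKernel

variable {K : ℝ → ℝ → ℝ} {R : ℝ} {C : ℝ≥0} (hK : IsVolterraKernel K R C) (hR : 0 ≤ R)
include hK

noncomputable def hammersteinMap {F : ℝ → ℝ} (hF : Continuous F) (f φ : C(Icc 0 R, ℝ)) :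
    C(Icc 0 R, ℝ) where
  toFun x := f x + volterra K (F ∘ IccExtend hR φ) x
  continuous_toFun :=
    f.continuous.add (hK.continuousOn_volterra (hF.comp φ.continuous.Icc_extend')).domRestrict

theorem exists_eq_add_volterra {F : ℝ → ℝ} {L : ℝ≥0} (hF : LipschitzWith L F)
    (f : C(Icc 0 R, ℝ)) :
    ∃ φ : C(Icc 0 R, ℝ), ∀ x : Icc 0 R, φ x = f x + volterra K (F ∘ IccExtend hR φ) x := by
  have hw : ∀ φ : C(Icc 0 R, ℝ), Continuous (F ∘ IccExtend hR φ) := fun φ =>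
    hF.continuous.comp φ.continuous.Icc_extend'
  obtain ⟨φ, hφ⟩ := exists_fixedPoint_of_abs_sub_le_integral (A := C * R * L)
    (T := hK.hammersteinMap hR hF.continuous f) (by positivity) fun φ₁ φ₂ g hg hφg x => by
      change |f x + _ - (f x + _)| ≤ _
      rw [add_sub_add_left_eq_sub, mul_assoc, ← intervalIntegral.integral_const_mul]
      refine hK.abs_volterra_sub_volterra_le (hw φ₁) (hw φ₂) (continuous_const.mul hg) x.2.1 x.2.2
        fun t ht => ?_
      have htR : t ∈ Icc 0 R := ⟨ht.1, ht.2.trans x.2.2⟩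
      simp only [comp_apply, IccExtend_of_mem hR _ htR]
      simpa [Real.dist_eq] using (hF.dist_le_mul _ _).trans
        (mul_le_mul_of_nonneg_left (hφg ⟨t, htR⟩) L.2)
  exact ⟨φ, fun x => (congrArg (· x) hφ).symm⟩

end IsVolterraKernel

theorem abs_rpow_sub_rpow_le {c p x y : ℝ} (hc : 0 < c) (hp : p ≤ 1) (hx : c ≤ x) (hy : c ≤ y) :
    |x ^ p - y ^ p| ≤ |p| * c ^ (p - 1) * |x - y| := by
  have h := Convex.norm_image_sub_le_of_norm_hasDerivWithin_le (f := fun t : ℝ => t ^ p)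
    (f' := fun t => p * t ^ (p - 1)) (C := |p| * c ^ (p - 1)) (s := Ici c)
    (fun t ht => (Real.hasDerivAt_rpow_const (Or.inl (hc.trans_le ht).ne')).hasDerivWithinAt)
    (fun t ht => by
      rw [Real.norm_eq_abs, abs_mul, abs_of_nonneg (Real.rpow_nonneg (hc.le.trans ht) _)]
      exact mul_le_mul_of_nonneg_left (Real.rpow_le_rpow_of_nonpos hc ht (by linarith))
        (abs_nonneg p))
    (convex_Ici c) hy hx
  simpa only [Real.norm_eq_abs] using h

theorem lipschitzWith_rpow_max {c p : ℝ} (hc : 0 < c) (hp : p ≤ 1) :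
    LipschitzWith (|p| * c ^ (p - 1)).toNNReal fun t => max t c ^ p :=
  LipschitzWith.of_dist_le_mul fun s t => by
    rw [Real.dist_eq, Real.dist_eq, Real.coe_toNNReal _ (by positivity)]
    exact (abs_rpow_sub_rpow_le hc hp (le_max_right _ _) (le_max_right _ _)).trans
      (mul_le_mul_of_nonneg_left (abs_max_sub_max_le_abs _ _ _) (by positivity))

section Kernel

variable {N : ℕ} {β τ s u r₁ r₂ : ℝ}

theorem measurable_G₁ (N : ℕ) : Measurable (uncurry (G₁ N)) :=
  measurable_parametric_intervalIntegral (μ := volume)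
    (f := fun (p : ℝ × ℝ) u => p.1 ^ (N - 1) / u ^ (N - 1))
    (by fun_prop) measurable_fst measurable_snd

theorem measurable_G₂ (N : ℕ) : Measurable (uncurry (G₂ N)) :=
  measurable_parametric_intervalIntegral (μ := volume)
    (f := fun (p : ℝ × ℝ) u => u ^ (N - 1) * G₁ N p.1 u)
    (measurable_snd.pow_const _ |>.mul <|
      (measurable_G₁ N).comp (measurable_fst.fst.prodMk measurable_snd))
    measurable_fst measurable_snd

theorem measurable_Gext (N : ℕ) (β r : ℝ) : Measurable fun τ => Gext N β τ r := by
  have hH : Measurable (uncurry fun τ s => H₁ N τ s * s ^ ((1 : ℤ) - N)) := by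
    unfold H₁; fun_prop
  have hG : Measurable (uncurry fun τ s => G₂ N τ s * s ^ ((1 : ℤ) - N)) :=
    (measurable_G₂ N).mul (by fun_prop)
  refine Measurable.ite (measurableSet_singleton 0) measurable_const ?_
  exact ((measurable_parametric_intervalIntegral hH measurable_id measurable_const).const_mul _).add
    ((measurable_parametric_intervalIntegral hG measurable_id measurable_const).const_mul _)

theorem G₁_mem_Icc (hτ : 0 < τ) (hu : τ ≤ u) : G₁ N τ u ∈ Icc 0 (u - τ) := by
  have h := integral_mem_Icc_of_mem_Icc (M := 1) hu
    (by fun_prop : Measurable fun v : ℝ => τ ^ (N - 1) / v ^ (N - 1)) fun v hv =>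
      ⟨by have := hτ.trans_le hv.1; positivity,
        div_le_one_of_le₀ (pow_le_pow_left₀ hτ.le hv.1 _) (pow_nonneg (hτ.le.trans hv.1) _)⟩
  rwa [one_mul] at h

theorem G₂_mem_Icc (hN : 1 ≤ N) (hτ : 0 < τ) (hs : τ ≤ s) : G₂ N τ s ∈ Icc 0 (s ^ (N + 1)) := by
  have hmeas : Measurable fun u => u ^ (N - 1) * G₁ N τ u :=
    (measurable_id.pow_const _).mul ((measurable_G₁ N).comp (measurable_const.prodMk measurable_id))
  have h := integral_mem_Icc_of_mem_Icc (M := s ^ N) hs hmeas fun u hu => by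
    have hu0 : 0 ≤ u := hτ.le.trans hu.1
    obtain ⟨h₀, h₁⟩ := G₁_mem_Icc (N := N) hτ hu.1
    refine ⟨mul_nonneg (pow_nonneg hu0 _) h₀, ?_⟩
    calc u ^ (N - 1) * G₁ N τ u ≤ s ^ (N - 1) * s :=
          mul_le_mul (pow_le_pow_left₀ hu0 hu.2 _) (by linarith [hu.2]) h₀
            (pow_nonneg (hu0.trans hu.2) _)
      _ = s ^ N := by rw [← pow_succ, Nat.sub_add_cancel hN]
  refine ⟨h.1, h.2.trans ?_⟩
  rw [pow_succ]
  exact mul_le_mul_of_nonneg_left (by linarith) (pow_nonneg (hτ.le.trans hs) _)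

theorem H₁_mem_Icc (hN : 1 ≤ N) (hτ : 0 < τ) (hs : τ ≤ s) : H₁ N τ s ∈ Icc 0 (s ^ (N + 1)) := by
  have hN' : (1 : ℝ) ≤ N := by exact_mod_cast hN
  have hpow : τ ^ N ≤ s ^ N := pow_le_pow_left₀ hτ.le hs N
  have hsN : 0 ≤ s ^ N := pow_nonneg (hτ.le.trans hs) N
  refine ⟨div_nonneg (mul_nonneg hτ.le (sub_nonneg.2 hpow)) (by positivity), ?_⟩
  calc H₁ N τ s ≤ τ * (s ^ N - τ ^ N) := div_le_self (mul_nonneg hτ.le (sub_nonneg.2 hpow)) hN'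
    _ ≤ s * s ^ N := mul_le_mul hs (by linarith [pow_nonneg hτ.le N]) (by linarith) (by linarith)
    _ = s ^ (N + 1) := by ring

theorem mul_zpow_one_sub_mem_Icc {x : ℝ} (hs : 0 < s) (hx : x ∈ Icc 0 (s ^ (N + 1))) :
    x * s ^ ((1 : ℤ) - N) ∈ Icc 0 (s ^ 2) := by
  have hz : 0 < s ^ ((1 : ℤ) - N) := zpow_pos hs _
  refine ⟨mul_nonneg hx.1 hz.le, ?_⟩
  calc x * s ^ ((1 : ℤ) - N) ≤ s ^ (N + 1) * s ^ ((1 : ℤ) - N) :=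
        mul_le_mul_of_nonneg_right hx.2 hz.le
    _ = s ^ 2 := by
        rw [← zpow_natCast, ← zpow_add₀ hs.ne', ← zpow_natCast]
        congr 1
        push_cast
        ring

theorem integral_sub_integral_mul_zpow_mem_Icc {X : ℝ → ℝ} (hX : Measurable X) (hτ : 0 < τ)
    (hXs : ∀ s, τ ≤ s → X s ∈ Icc 0 (s ^ (N + 1))) (h₁ : τ ≤ r₁) (h₂ : r₁ ≤ r₂) :
    (∫ s in τ..r₂, X s * s ^ ((1 : ℤ) - N)) - (∫ s in τ..r₁, X s * s ^ ((1 : ℤ) - N))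
      ∈ Icc 0 (r₂ ^ 2 * (r₂ - r₁)) := by
  have hmeas : Measurable fun s => X s * s ^ ((1 : ℤ) - N) := hX.mul (by fun_prop)
  have hbound : ∀ s ∈ Icc τ r₂, X s * s ^ ((1 : ℤ) - N) ∈ Icc 0 (r₂ ^ 2) := fun s hs =>
    have h := mul_zpow_one_sub_mem_Icc (hτ.trans_le hs.1) (hXs s hs.1)
    ⟨h.1, h.2.trans (pow_le_pow_left₀ (hτ.le.trans hs.1) hs.2 2)⟩
  have hint : ∀ r, τ ≤ r → r ≤ r₂ →
      IntervalIntegrable (fun s => X s * s ^ ((1 : ℤ) - N)) volume τ r := fun r hr hr₂ =>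
    intervalIntegrable_of_abs_le hr hmeas fun s hs =>
      have h := hbound s ⟨hs.1, hs.2.trans hr₂⟩
      abs_le.2 ⟨by linarith [h.1, sq_nonneg r₂], h.2⟩
  rw [intervalIntegral.integral_interval_sub_left (hint r₂ (h₁.trans h₂) le_rfl) (hint r₁ h₁ h₂)]
  exact integral_mem_Icc_of_mem_Icc h₂ hmeas fun s hs => hbound s ⟨h₁.trans hs.1, hs.2⟩

theorem G₂_coeff_nonneg (hN : 2 ≤ N) (hβ₁ : -(1 / (4 * ((N : ℝ) - 1))) ≤ β) :
    0 ≤ (4 * ((N : ℝ) - 1) * β + 1) / 4 := by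
  have h4 : 0 < 4 * ((N : ℝ) - 1) := by
    have : (2 : ℝ) ≤ N := by exact_mod_cast hN
    linarith
  have := mul_le_mul_of_nonneg_left hβ₁ h4.le
  rw [mul_neg, mul_one_div_cancel h4.ne'] at this
  linarith

theorem Gext_sub_Gext_mem_Icc (hN : 2 ≤ N) (hβ₁ : -(1 / (4 * ((N : ℝ) - 1))) ≤ β) (hβ₂ : β ≤ 0)
    (hτ : 0 ≤ τ) (h₁ : τ ≤ r₁) (h₂ : r₁ ≤ r₂) :
    Gext N β τ r₂ - Gext N β τ r₁
      ∈ Icc 0 ((-β + (4 * ((N : ℝ) - 1) * β + 1) / 4) * r₂ ^ 2 * (r₂ - r₁)) := by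
  have hN₁ : 1 ≤ N := by omega
  have hb := G₂_coeff_nonneg hN hβ₁
  rcases hτ.eq_or_lt with rfl | hτ
  · simp only [Gext, if_pos, sub_self]
    exact ⟨le_rfl, mul_nonneg (mul_nonneg (by linarith) (sq_nonneg _)) (by linarith)⟩
  obtain ⟨hH₀, hH₁⟩ := integral_sub_integral_mul_zpow_mem_Icc (by unfold H₁; fun_prop)
    hτ (fun s hs => H₁_mem_Icc hN₁ hτ hs) h₁ h₂
  obtain ⟨hG₀, hG₁⟩ := integral_sub_integral_mul_zpow_mem_Icc (X := G₂ N τ)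
    ((measurable_G₂ N).comp (measurable_const.prodMk measurable_id))
    hτ (fun s hs => G₂_mem_Icc hN₁ hτ hs) h₁ h₂
  rw [Gext, Gext, if_neg hτ.ne', if_neg hτ.ne', G, G]
  have hβ : 0 ≤ -β := neg_nonneg.2 hβ₂
  constructor
  · nlinarith [mul_nonneg hβ hH₀, mul_nonneg hb hG₀]
  · nlinarith [mul_le_mul_of_nonneg_left hH₁ hβ, mul_le_mul_of_nonneg_left hG₁ hb]

theorem exists_isVolterraKernel_Gext {N : ℕ} {β : ℝ} (hN : 2 ≤ N)
    (hβ₁ : -(1 / (4 * ((N : ℝ) - 1))) ≤ β) (hβ₂ : β ≤ 0) (R : ℝ) :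
    ∃ C, IsVolterraKernel (Gext N β) R C := by
  have hb : 0 ≤ -β + (4 * ((N : ℝ) - 1) * β + 1) / 4 :=
    add_nonneg (neg_nonneg.2 hβ₂) (G₂_coeff_nonneg hN hβ₁)
  refine ⟨⟨_, mul_nonneg hb (sq_nonneg R)⟩, measurable_Gext N β, fun τ => by simp [Gext, G],
    fun τ r₁ r₂ hτ h₁ h₂ hR => ?_⟩
  have h := Gext_sub_Gext_mem_Icc hN hβ₁ hβ₂ hτ h₁ h₂
  refine ⟨h.1, h.2.trans (mul_le_mul_of_nonneg_right (mul_le_mul_of_nonneg_left ?_ hb)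
    (sub_nonneg.2 h₂))⟩
  exact pow_le_pow_left₀ (hτ.trans (h₁.trans h₂)) hR 2

end Kernel

/-- Claim 3.1 of the paper: for `N ≥ 2`, `−1/(4(N−1)) ≤ β ≤ 0`,
`c₂, c₄ > 0` and `R > 0`, the integral equation
`h(r) = c₄ + c₂ r² + ∫_0^r G(τ,r) h(τ)^{−1/3} dτ` has a continuous solution `h`
on `[0,R]` with `h(r) ≥ c₄ + c₂ r²` there. -/
theorem stmt_13 (N : ℕ) (hN : 2 ≤ N) (β : ℝ)
    (hβ₁ : -(1 / (4 * ((N : ℝ) - 1))) ≤ β) (hβ₂ : β ≤ 0)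
    (c₂ c₄ R : ℝ) (hc₂ : 0 < c₂) (hc₄ : 0 < c₄) (hR : 0 < R) :
    ∃ h : ℝ → ℝ, Continuous h ∧
      (∀ r ∈ Set.Icc (0 : ℝ) R, c₄ + c₂ * r ^ 2 ≤ h r) ∧
      (∀ r ∈ Set.Icc (0 : ℝ) R,
        h r = c₄ + c₂ * r ^ 2
          + ∫ τ in (0 : ℝ)..r, Gext N β τ r * h τ ^ (-(1 / 3) : ℝ)) := by
  obtain ⟨C, hK⟩ := exists_isVolterraKernel_Gext hN hβ₁ hβ₂ R
  obtain ⟨φ, hφ⟩ := hK.exists_eq_add_volterra hR.le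
    (lipschitzWith_rpow_max (p := -(1 / 3)) hc₄ (by norm_num))
    ⟨fun x => c₄ + c₂ * x ^ 2, by fun_prop⟩
  have hlower : ∀ x : Icc 0 R, c₄ + c₂ * (x : ℝ) ^ 2 ≤ φ x := fun x => by
    rw [hφ x]
    exact le_add_of_nonneg_right (hK.volterra_nonneg
      (fun t => Real.rpow_nonneg (hc₄.le.trans (le_max_right _ _)) _) x.2.1 x.2.2)
  have hc₄φ : ∀ t, c₄ ≤ IccExtend hR.le φ t := fun t =>
    (le_add_of_nonneg_right (by positivity)).trans (hlower _)
  refine ⟨IccExtend hR.le φ, φ.continuous.Icc_extend', fun r hr => ?_, fun r hr => ?_⟩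
  · rw [IccExtend_of_mem _ _ hr]
    exact hlower ⟨r, hr⟩
  · rw [IccExtend_of_mem _ _ hr, hφ ⟨r, hr⟩]
    simp only [ContinuousMap.coe_mk, volterra, comp_apply, max_eq_left (hc₄φ _)]
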